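/- arXiv:2506.15226 — 3 statements merged into one kernel-verified Lean document; each statement's English description precedes it below -/
import Mathlib

section
/- Let d ≥ 1 be an integer, α ∈ (0,1), β > 0 and δ > 0. Then for every ξ ∈ ℝ^d, 𝓕(f_{β,δ}^α − 1)(ξ) = Σ_{n≥1} (−1)^n a_n (βn)^{−d/2} e^{−nδ} e^{−|ξ|²/(2nβ)}, where the series converges absolutely. -/
open MeasureTheory Real

/-- The Fourier transform with normalization `(2π)^{-d/2} ∫ e^{-i x·ξ} ψ(x) dx`. -/
noncomputable def fourierT (d : ℕ) (ψ : EuclideanSpace ℝ (Fin d) → ℂ)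
    (ξ : EuclideanSpace ℝ (Fin d)) : ℂ :=
  (((2 * Real.pi) ^ (-(d : ℝ) / 2) : ℝ) : ℂ) *
    ∫ x : EuclideanSpace ℝ (Fin d),
      Complex.exp (-Complex.I * ((inner ℝ x ξ : ℝ) : ℂ)) * ψ x

/-- The forcing term `f_{β,δ}(x) = 1 - e^{-δ} e^{-β|x|²/2}`. -/
noncomputable def fβδ (d : ℕ) (β δ : ℝ) (x : EuclideanSpace ℝ (Fin d)) : ℝ :=
  1 - Real.exp (-δ) * Real.exp (-β * ‖x‖ ^ 2 / 2)

/-- The generalized binomial coefficient `a_n = (∏_{j=0}^{n-1} (α - j)) / n!`. -/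
noncomputable def binCoeff (α : ℝ) (n : ℕ) : ℝ :=
  (∏ j ∈ Finset.range n, (α - j)) / (n.factorial : ℝ)

/-!
For every `x`, `0 < e^{-δ} e^{-β|x|²/2} ≤ e^{-δ} < 1`, so the binomial series expands
`f_{β,δ}(x)^α - 1` as `∑_{n ≥ 1} a_n (-e^{-δ})^n e^{-nβ|x|²/2}`, a series of Gaussians.
Since `|a_n| ≤ 1` for `|α| ≤ 1`, the `L¹` norm of the `n`-th term is at most
`e^{-nδ} (2π/β)^{d/2}`, which is summable; hence the Fourier transform may be taken term by
term, and the transform of each Gaussian is explicit.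
-/

section Binomial

lemma binCoeff_eq_choose (α : ℝ) (n : ℕ) : binCoeff α n = Ring.choose α n := by
  rw [Ring.choose_eq_smul, binCoeff, ← descPochhammer_eval_eq_prod_range, smul_eq_mul,
    ← Polynomial.aeval_eq_smeval, ← descPochhammer_map (algebraMap ℤ ℝ), Polynomial.aeval_def,
    Polynomial.eval_map, div_eq_inv_mul]

lemma hasSum_binCoeff_mul_pow (α : ℝ) {t : ℝ} (ht : |t| < 1) :
    HasSum (fun n => binCoeff α n * t ^ n) ((1 + t) ^ α) := by
  have h := Real.one_add_rpow_hasFPowerSeriesOnBall_zero (a := α) |>.hasSum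
    (y := t) (by simpa [enorm_eq_nnnorm, ← NNReal.coe_lt_coe] using ht)
  simpa [binCoeff_eq_choose, binomialSeries, FormalMultilinearSeries.coeff_ofScalars, mul_comm]
    using h

lemma hasSum_binCoeff_succ_mul_pow (α : ℝ) {t : ℝ} (ht : |t| < 1) :
    HasSum (fun n => binCoeff α (n + 1) * t ^ (n + 1)) ((1 + t) ^ α - 1) := by
  simpa [binCoeff] using (hasSum_nat_add_iff' 1).2 (hasSum_binCoeff_mul_pow α ht)

lemma binCoeff_succ (α : ℝ) (n : ℕ) :
    binCoeff α (n + 1) = (α - n) / (n + 1) * binCoeff α n := by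
  rw [binCoeff, binCoeff, Finset.prod_range_succ, Nat.factorial_succ]
  push_cast
  field_simp

lemma abs_binCoeff_le_one {α : ℝ} (hα : |α| ≤ 1) (n : ℕ) : |binCoeff α n| ≤ 1 := by
  induction n with
  | zero => simp [binCoeff]
  | succ n ih =>
    have hn : |α - n| ≤ n + 1 := by
      rw [abs_le] at hα ⊢
      constructor <;> linarith [(n.cast_nonneg : (0 : ℝ) ≤ n)]
    rw [binCoeff_succ, abs_mul, abs_div, abs_of_pos (n.cast_add_one_pos : (0 : ℝ) < n + 1)]
    exact mul_le_one₀ (div_le_one_of_le₀ hn (by positivity)) (abs_nonneg _) ih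

end Binomial

section Fourier

variable {d : ℕ}

lemma norm_cexp_neg_I_mul_inner (x ξ : EuclideanSpace ℝ (Fin d)) :
    ‖Complex.exp (-Complex.I * ((inner ℝ x ξ : ℝ) : ℂ))‖ = 1 := by
  rw [Complex.norm_exp]
  simp

lemma norm_fourierT_le (ψ : EuclideanSpace ℝ (Fin d) → ℂ) (ξ : EuclideanSpace ℝ (Fin d)) :
    ‖fourierT d ψ ξ‖ ≤ (2 * π) ^ (-(d : ℝ) / 2) * ∫ x, ‖ψ x‖ := by
  rw [fourierT, norm_mul, Complex.norm_real, Real.norm_of_nonneg (by positivity)]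
  gcongr
  refine (norm_integral_le_integral_norm _).trans_eq ?_
  simp only [norm_mul, norm_cexp_neg_I_mul_inner, one_mul]

lemma fourierT_const_mul (c : ℂ) (ψ : EuclideanSpace ℝ (Fin d) → ℂ)
    (ξ : EuclideanSpace ℝ (Fin d)) :
    fourierT d (fun x => c * ψ x) ξ = c * fourierT d ψ ξ := by
  simp only [fourierT, mul_left_comm _ c, integral_const_mul]

lemma hasSum_fourierT {ι : Type*} [Countable ι] {F : ι → EuclideanSpace ℝ (Fin d) → ℂ}
    {ψ : EuclideanSpace ℝ (Fin d) → ℂ} (hF : ∀ i, Integrable (F i))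
    (hF_sum : Summable fun i => ∫ x, ‖F i x‖) (hψ : ∀ x, HasSum (F · x) (ψ x))
    (ξ : EuclideanSpace ℝ (Fin d)) :
    HasSum (fun i => fourierT d (F i) ξ) (fourierT d ψ ξ) := by
  set e : EuclideanSpace ℝ (Fin d) → ℂ :=
    fun x => Complex.exp (-Complex.I * ((inner ℝ x ξ : ℝ) : ℂ))
  have he : Continuous e := by fun_prop
  have h := hasSum_integral_of_summable_integral_norm
    (F := fun i x => e x * F i x)
    (fun i => (hF i).bdd_mul he.aestronglyMeasurable
      (.of_forall fun x => (norm_cexp_neg_I_mul_inner x ξ).le))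
    (by simpa only [norm_mul, e, norm_cexp_neg_I_mul_inner, one_mul] using hF_sum)
  simp only [fun x => ((hψ x).mul_left (e x)).tsum_eq] at h
  exact h.mul_left _

lemma integrable_rexp_neg_mul_sq_norm {b : ℝ} (hb : 0 < b) :
    Integrable (fun x : EuclideanSpace ℝ (Fin d) => rexp (-b * ‖x‖ ^ 2)) := by
  refine (GaussianFourier.integrable_cexp_neg_mul_sq_norm_add
    (b := (b : ℂ)) (by simpa using hb) 0 (0 : EuclideanSpace ℝ (Fin d))).norm.congr
    (.of_forall fun x => ?_)
  simp only [zero_mul, add_zero, Complex.norm_exp]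
  norm_cast

lemma integral_norm_ofReal_mul_rexp_neg_mul_sq_norm (c : ℝ) {b : ℝ} (hb : 0 < b) :
    ∫ x : EuclideanSpace ℝ (Fin d), ‖((c * rexp (-b * ‖x‖ ^ 2) : ℝ) : ℂ)‖ =
      |c| * (π / b) ^ ((d : ℝ) / 2) := by
  simp only [Complex.norm_real, Real.norm_eq_abs, abs_mul, abs_of_pos (exp_pos _)]
  rw [integral_const_mul, GaussianFourier.integral_rexp_neg_mul_sq_norm hb,
    finrank_euclideanSpace_fin]

lemma fourierT_rexp_neg_mul_sq_norm {b : ℝ} (hb : 0 < b) (ξ : EuclideanSpace ℝ (Fin d)) :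
    fourierT d (fun x => (rexp (-b * ‖x‖ ^ 2) : ℂ)) ξ =
      ((2 * b) ^ (-(d : ℝ) / 2) * rexp (-‖ξ‖ ^ 2 / (4 * b)) : ℝ) := by
  have h := GaussianFourier.integral_cexp_neg_mul_sq_norm_add
    (V := EuclideanSpace ℝ (Fin d)) (b := (b : ℂ)) (by simpa using hb) (-Complex.I) ξ
  have hint (x : EuclideanSpace ℝ (Fin d)) :
      Complex.exp (-Complex.I * ((inner ℝ x ξ : ℝ) : ℂ)) * (rexp (-b * ‖x‖ ^ 2) : ℂ) =
        Complex.exp (-(b : ℂ) * (‖x‖ : ℂ) ^ 2 + -Complex.I * ((inner ℝ ξ x : ℝ) : ℂ)) := by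
    rw [Complex.exp_add, real_inner_comm, Complex.ofReal_exp]
    push_cast
    ring
  have hpow : ((π : ℂ) / b) ^ ((d : ℂ) / 2) = (((π / b) ^ ((d : ℝ) / 2) : ℝ) : ℂ) := by
    rw [Complex.ofReal_cpow (by positivity)]
    push_cast
    rfl
  have hexp : Complex.exp ((-Complex.I) ^ 2 * (‖ξ‖ : ℂ) ^ 2 / (4 * b)) =
      (rexp (-‖ξ‖ ^ 2 / (4 * b)) : ℂ) := by
    rw [neg_sq, Complex.I_sq, Complex.ofReal_exp]
    push_cast
    ring_nf
  have hconst :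
      (2 * π) ^ (-(d : ℝ) / 2) * (π / b) ^ ((d : ℝ) / 2) = (2 * b) ^ (-(d : ℝ) / 2) := by
    rw [show π / b = 2 * π / (2 * b) by field_simp, Real.div_rpow (by positivity) (by positivity),
      neg_div, Real.rpow_neg (by positivity), Real.rpow_neg (by positivity)]
    have : 0 < (2 * π) ^ ((d : ℝ) / 2) := by positivity
    field_simp
  rw [fourierT, funext hint, h, finrank_euclideanSpace_fin, hpow, hexp, ← hconst]
  push_cast
  ring

end Fourier

section GaussianSeries

variable {d : ℕ}

-- The term `a_{n+1} (-e^{-δ} e^{-β|x|²/2})^{n+1}` of the binomial series of `fβδ^α`.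
noncomputable def fβδSeriesTerm (d : ℕ) (α β δ : ℝ) (n : ℕ) (x : EuclideanSpace ℝ (Fin d)) : ℝ :=
  binCoeff α (n + 1) * (-rexp (-δ)) ^ (n + 1) * rexp (-((n + 1) * β / 2) * ‖x‖ ^ 2)

lemma hasSum_fβδSeriesTerm (α : ℝ) {β δ : ℝ} (hβ : 0 ≤ β) (hδ : 0 < δ)
    (x : EuclideanSpace ℝ (Fin d)) :
    HasSum (fβδSeriesTerm d α β δ · x) (fβδ d β δ x ^ α - 1) := by
  have hg : |-(rexp (-δ) * rexp (-β * ‖x‖ ^ 2 / 2))| < 1 := by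
    rw [abs_neg, abs_of_pos (by positivity), ← exp_add, exp_lt_one_iff]
    nlinarith [sq_nonneg ‖x‖]
  have hpow (n : ℕ) : (-(rexp (-δ) * rexp (-β * ‖x‖ ^ 2 / 2))) ^ (n + 1) =
      (-rexp (-δ)) ^ (n + 1) * rexp (-((n + 1) * β / 2) * ‖x‖ ^ 2) := by
    rw [neg_mul_eq_neg_mul, mul_pow, ← exp_nat_mul]
    push_cast
    ring_nf
  simpa only [fβδSeriesTerm, hpow, mul_assoc, fβδ, ← sub_eq_add_neg] using hasSum_binCoeff_succ_mul_pow α hg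

lemma integrable_fβδSeriesTerm (α : ℝ) {β : ℝ} (hβ : 0 < β) (δ : ℝ) (n : ℕ) :
    Integrable (fun x => (fβδSeriesTerm d α β δ n x : ℂ)) :=
  ((integrable_rexp_neg_mul_sq_norm (by positivity)).const_mul _).ofReal

lemma summable_integral_norm_fβδSeriesTerm {α β δ : ℝ} (hα : |α| ≤ 1) (hβ : 0 < β)
    (hδ : 0 < δ) :
    Summable fun n => ∫ x, ‖(fβδSeriesTerm d α β δ n x : ℂ)‖ := by
  refine .of_nonneg_of_le (fun n => integral_nonneg fun x => norm_nonneg _) (fun n => ?_)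
    ((summable_geometric_of_lt_one (exp_nonneg _) (exp_lt_one_iff.2 (neg_lt_zero.2 hδ))).mul_right
      ((2 * π / β) ^ ((d : ℝ) / 2)))
  have hc : |binCoeff α (n + 1) * (-rexp (-δ)) ^ (n + 1)| ≤ rexp (-δ) ^ n := calc
    _ = |binCoeff α (n + 1)| * rexp (-δ) ^ (n + 1) := by
      simp only [abs_mul, abs_pow, abs_neg, abs_of_pos (exp_pos _)]
    _ ≤ 1 * rexp (-δ) ^ n :=
      mul_le_mul (abs_binCoeff_le_one hα _)
        (pow_le_pow_of_le_one (exp_nonneg _) (exp_le_one_iff.2 (by linarith)) n.le_succ)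
        (by positivity) zero_le_one
    _ = rexp (-δ) ^ n := one_mul _
  have hπ : π / ((n + 1) * β / 2) ≤ 2 * π / β := by
    rw [div_le_div_iff₀ (by positivity) hβ]
    nlinarith [mul_nonneg (mul_nonneg pi_pos.le hβ.le) n.cast_nonneg]
  simp only [fβδSeriesTerm]
  rw [integral_norm_ofReal_mul_rexp_neg_mul_sq_norm _ (by positivity)]
  gcongr

lemma fourierT_fβδSeriesTerm (α : ℝ) {β : ℝ} (hβ : 0 < β) (δ : ℝ) (n : ℕ)
    (ξ : EuclideanSpace ℝ (Fin d)) :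
    fourierT d (fun x => (fβδSeriesTerm d α β δ n x : ℂ)) ξ =
      (((-1 : ℝ) ^ (n + 1) * binCoeff α (n + 1) * (β * (n + 1)) ^ (-(d : ℝ) / 2) *
        Real.exp (-(n + 1) * δ) * Real.exp (-‖ξ‖ ^ 2 / (2 * (n + 1) * β)) : ℝ) : ℂ) := by
  simp only [fβδSeriesTerm, Complex.ofReal_mul]
  rw [fourierT_const_mul, fourierT_rexp_neg_mul_sq_norm (by positivity), ← Complex.ofReal_mul,
    ← Complex.ofReal_mul, show 2 * ((n + 1) * β / 2) = β * (n + 1) by ring,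
    show 4 * ((n + 1) * β / 2) = 2 * (n + 1) * β by ring, neg_pow (rexp (-δ)), ← exp_nat_mul]
  push_cast
  ring_nf

end GaussianSeries

theorem stmt_1_general (d : ℕ) (α : ℝ) (hα : α ∈ Set.Ioo (0 : ℝ) 1)
    (β δ : ℝ) (hβ : 0 < β) (hδ : 0 < δ) (ξ : EuclideanSpace ℝ (Fin d)) :
    Summable (fun n : ℕ =>
      |(-1 : ℝ) ^ (n + 1) * binCoeff α (n + 1) * (β * (n + 1)) ^ (-(d : ℝ) / 2) *
        Real.exp (-(n + 1) * δ) * Real.exp (-‖ξ‖ ^ 2 / (2 * (n + 1) * β))|) ∧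
    fourierT d (fun x => ((fβδ d β δ x ^ α - 1 : ℝ) : ℂ)) ξ =
      ((∑' n : ℕ,
        (-1 : ℝ) ^ (n + 1) * binCoeff α (n + 1) * (β * (n + 1)) ^ (-(d : ℝ) / 2) *
          Real.exp (-(n + 1) * δ) * Real.exp (-‖ξ‖ ^ 2 / (2 * (n + 1) * β)) : ℝ) : ℂ) := by
  have hα' : |α| ≤ 1 := abs_le.2 ⟨by linarith [hα.1], hα.2.le⟩
  have hL1 := summable_integral_norm_fβδSeriesTerm (d := d) hα' hβ hδ
  have key := hasSum_fourierT (integrable_fβδSeriesTerm α hβ δ) hL1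
    (fun x => Complex.hasSum_ofReal.2 (hasSum_fβδSeriesTerm α hβ.le hδ x)) ξ
  simp only [fourierT_fβδSeriesTerm α hβ] at key
  refine ⟨.of_nonneg_of_le (fun n => abs_nonneg _) (fun n => ?_)
    (hL1.mul_left ((2 * π) ^ (-(d : ℝ) / 2))), by rw [Complex.ofReal_tsum, key.tsum_eq]⟩
  rw [← Real.norm_eq_abs, ← Complex.norm_real, ← fourierT_fβδSeriesTerm α hβ]
  exact norm_fourierT_le _ _

theorem stmt_1 (d : ℕ) (hd : 1 ≤ d) (α : ℝ) (hα : α ∈ Set.Ioo (0 : ℝ) 1)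
    (β δ : ℝ) (hβ : 0 < β) (hδ : 0 < δ) (ξ : EuclideanSpace ℝ (Fin d)) :
    Summable (fun n : ℕ =>
      |(-1 : ℝ) ^ (n + 1) * binCoeff α (n + 1) * (β * (n + 1)) ^ (-(d : ℝ) / 2) *
        Real.exp (-(n + 1) * δ) * Real.exp (-‖ξ‖ ^ 2 / (2 * (n + 1) * β))|) ∧
    fourierT d (fun x => ((fβδ d β δ x ^ α - 1 : ℝ) : ℂ)) ξ =
      ((∑' n : ℕ,
        (-1 : ℝ) ^ (n + 1) * binCoeff α (n + 1) * (β * (n + 1)) ^ (-(d : ℝ) / 2) *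
          Real.exp (-(n + 1) * δ) * Real.exp (-‖ξ‖ ^ 2 / (2 * (n + 1) * β)) : ℝ) : ℂ) :=
  stmt_1_general d α hα β δ hβ hδ ξ
end

section
/- Let k > 1. There exist c > 0 and η₀ ∈ (0,1) such that for all γ > 0 and η > 0 with ηγ ≤ η₀, one has c γ^{1−k} ≤ ∫₀^∞ y^{−k} e^{−ηy − γ/y} dy ≤ Γ(k−1) γ^{1−k}. -/
/-!
The substitution `y = 1/x` turns `∫ y^(-k) e^(-γ/y) dy` into the Gamma integral
`∫ x^(k-2) e^(-γx) dx = Γ(k-1) γ^(1-k)`; dropping the factor `e^(-ηy) ≤ 1` gives the upper bound.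
For the lower bound, restrict to `y ∈ (γ, 2γ]`, where `y^(-k) ≥ (2γ)^(-k)`, `γ/y ≤ 1` and
`ηy ≤ 2ηγ`, so the integrand is at least `(2γ)^(-k) e^(-(1 + 2ηγ))` on an interval of length `γ`.
-/

open MeasureTheory Set Real

section InversionSubstitution

variable {E : Type*} [NormedAddCommGroup E] [NormedSpace ℝ E]

lemma integral_Ioi_rpow_neg_two_smul_comp_inv (g : ℝ → E) :
    ∫ x in Ioi (0 : ℝ), x ^ (-2 : ℝ) • g x⁻¹ = ∫ y in Ioi 0, g y := by
  rw [← integral_comp_rpow_Ioi g (p := -1) (by norm_num)]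
  refine setIntegral_congr_fun measurableSet_Ioi fun x _ => ?_
  norm_num [rpow_neg_one]

lemma integrableOn_Ioi_rpow_neg_two_smul_comp_inv_iff (g : ℝ → E) :
    IntegrableOn (fun x => x ^ (-2 : ℝ) • g x⁻¹) (Ioi 0) ↔ IntegrableOn g (Ioi 0) := by
  rw [← integrableOn_Ioi_comp_rpow_iff g (p := -1) (by norm_num)]
  refine integrableOn_congr_fun (fun x _ => ?_) measurableSet_Ioi
  norm_num [rpow_neg_one]

end InversionSubstitution

lemma rpow_neg_two_mul_inv_rpow_neg_mul_exp {k γ x : ℝ} (hx : 0 < x) :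
    x ^ (-2 : ℝ) * ((x⁻¹) ^ (-k) * exp (-(γ / x⁻¹))) = x ^ (k - 1 - 1) * exp (-(γ * x)) := by
  rw [inv_rpow hx.le, ← rpow_neg hx.le, neg_neg, div_inv_eq_mul, ← mul_assoc, ← rpow_add hx]
  ring_nf

section InverseGammaIntegral

variable {k γ : ℝ}

lemma integrableOn_rpow_neg_mul_exp_neg_div (hk : 1 < k) (hγ : 0 < γ) :
    IntegrableOn (fun y => y ^ (-k) * exp (-(γ / y))) (Ioi 0) := by
  rw [← integrableOn_Ioi_rpow_neg_two_smul_comp_inv_iff]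
  have hGamma : IntegrableOn (fun x : ℝ => x ^ (k - 1 - 1) * exp (-(γ * x))) (Ioi 0) := by
    simpa using integrableOn_rpow_mul_exp_neg_mul_rpow (s := k - 1 - 1) (p := 1)
      (by linarith) one_pos hγ
  exact hGamma.congr_fun (fun x hx => (rpow_neg_two_mul_inv_rpow_neg_mul_exp hx).symm)
    measurableSet_Ioi

lemma integral_rpow_neg_mul_exp_neg_div (hk : 1 < k) (hγ : 0 < γ) :
    ∫ y in Ioi 0, y ^ (-k) * exp (-(γ / y)) = Gamma (k - 1) * γ ^ (1 - k) := by
  rw [← integral_Ioi_rpow_neg_two_smul_comp_inv]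
  calc ∫ x in Ioi 0, x ^ (-2 : ℝ) • ((x⁻¹) ^ (-k) * exp (-(γ / x⁻¹)))
      = ∫ x in Ioi 0, x ^ (k - 1 - 1) * exp (-(γ * x)) :=
        setIntegral_congr_fun measurableSet_Ioi fun x hx =>
          rpow_neg_two_mul_inv_rpow_neg_mul_exp hx
    _ = (1 / γ) ^ (k - 1) * Gamma (k - 1) :=
        integral_rpow_mul_exp_neg_mul_Ioi (by linarith) hγ
    _ = Gamma (k - 1) * γ ^ (1 - k) := by
        rw [one_div, inv_rpow hγ.le, ← rpow_neg hγ.le, neg_sub, mul_comm]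

end InverseGammaIntegral

section DampedIntegral

variable {k γ η : ℝ}

lemma rpow_neg_mul_exp_neg_mul_sub_div_le (hη : 0 ≤ η) {y : ℝ} (hy : 0 < y) :
    y ^ (-k) * exp (-η * y - γ / y) ≤ y ^ (-k) * exp (-(γ / y)) := by
  gcongr
  nlinarith

lemma integrableOn_rpow_neg_mul_exp_neg_mul_sub_div (hk : 1 < k) (hγ : 0 < γ) (hη : 0 ≤ η) :
    IntegrableOn (fun y => y ^ (-k) * exp (-η * y - γ / y)) (Ioi 0) := by
  refine (integrableOn_rpow_neg_mul_exp_neg_div hk hγ).mono' (by fun_prop) ?_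
  filter_upwards [ae_restrict_mem measurableSet_Ioi] with y (hy : 0 < y)
  rw [norm_of_nonneg (by positivity)]
  exact rpow_neg_mul_exp_neg_mul_sub_div_le hη hy

lemma integral_rpow_neg_mul_exp_neg_mul_sub_div_le (hk : 1 < k) (hγ : 0 < γ) (hη : 0 ≤ η) :
    ∫ y in Ioi 0, y ^ (-k) * exp (-η * y - γ / y) ≤ Gamma (k - 1) * γ ^ (1 - k) := by
  rw [← integral_rpow_neg_mul_exp_neg_div hk hγ]
  exact setIntegral_mono_on (integrableOn_rpow_neg_mul_exp_neg_mul_sub_div hk hγ hη)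
    (integrableOn_rpow_neg_mul_exp_neg_div hk hγ) measurableSet_Ioi
    fun y hy => rpow_neg_mul_exp_neg_mul_sub_div_le hη hy

lemma le_rpow_neg_mul_exp_neg_mul_sub_div_of_mem_Ioc (hk : 0 ≤ k) (hγ : 0 < γ) (hη : 0 ≤ η)
    {y : ℝ} (hy : y ∈ Ioc γ (2 * γ)) :
    (2 * γ) ^ (-k) * exp (-(1 + 2 * η * γ)) ≤ y ^ (-k) * exp (-η * y - γ / y) := by
  have hy₀ : 0 < y := hγ.trans hy.1
  have hγy : γ / y ≤ 1 := (div_le_one hy₀).mpr hy.1.le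
  have hηy : η * y ≤ 2 * η * γ := by nlinarith [hy.2]
  exact mul_le_mul (rpow_le_rpow_of_nonpos hy₀ hy.2 (by linarith))
    (exp_le_exp.mpr (by linarith)) (by positivity) (by positivity)

lemma le_integral_rpow_neg_mul_exp_neg_mul_sub_div (hk : 1 < k) (hγ : 0 < γ) (hη : 0 ≤ η) :
    2 ^ (-k) * exp (-(1 + 2 * η * γ)) * γ ^ (1 - k) ≤
      ∫ y in Ioi 0, y ^ (-k) * exp (-η * y - γ / y) := by
  have hint := integrableOn_rpow_neg_mul_exp_neg_mul_sub_div hk hγ hη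
  have hIoc : Ioc γ (2 * γ) ⊆ Ioi 0 := fun y hy => hγ.trans hy.1
  calc 2 ^ (-k) * exp (-(1 + 2 * η * γ)) * γ ^ (1 - k)
      = (2 * γ) ^ (-k) * exp (-(1 + 2 * η * γ)) * volume.real (Ioc γ (2 * γ)) := by
        rw [Real.volume_real_Ioc_of_le (by linarith), mul_rpow zero_le_two hγ.le,
          show 1 - k = -k + 1 by ring, rpow_add hγ, rpow_one]
        ring
    _ ≤ ∫ y in Ioc γ (2 * γ), y ^ (-k) * exp (-η * y - γ / y) :=
        setIntegral_ge_of_const_le_real measurableSet_Ioc measure_Ioc_lt_top.ne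
          (fun y hy => le_rpow_neg_mul_exp_neg_mul_sub_div_of_mem_Ioc (by linarith) hγ hη hy)
          (hint.mono_set hIoc)
    _ ≤ ∫ y in Ioi 0, y ^ (-k) * exp (-η * y - γ / y) :=
        setIntegral_mono_set hint
          (ae_restrict_of_forall_mem measurableSet_Ioi fun y (hy : 0 < y) => by positivity)
          hIoc.eventuallyLE

end DampedIntegral

theorem stmt_6 (k : ℝ) (hk : 1 < k) :
    ∃ c : ℝ, 0 < c ∧ ∃ η₀ ∈ Set.Ioo (0 : ℝ) 1, ∀ γ η : ℝ, 0 < γ → 0 < η → η * γ ≤ η₀ →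
      c * γ ^ (1 - k) ≤ ∫ y in Set.Ioi (0 : ℝ), y ^ (-k) * Real.exp (-η * y - γ / y) ∧
      (∫ y in Set.Ioi (0 : ℝ), y ^ (-k) * Real.exp (-η * y - γ / y)) ≤
        Real.Gamma (k - 1) * γ ^ (1 - k) := by
  refine ⟨2 ^ (-k) * exp (-2), by positivity, 1 / 2, ⟨by norm_num, by norm_num⟩,
    fun γ η hγ hη hηγ => ⟨?_, integral_rpow_neg_mul_exp_neg_mul_sub_div_le hk hγ hη.le⟩⟩
  calc 2 ^ (-k) * exp (-2) * γ ^ (1 - k)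
      ≤ 2 ^ (-k) * exp (-(1 + 2 * η * γ)) * γ ^ (1 - k) := by gcongr; linarith
    _ ≤ _ := le_integral_rpow_neg_mul_exp_neg_mul_sub_div hk hγ hη.le
end

section
/- Let θ > 0. Then δ^θ Σ_{n≥1} e^{−nδ} n^{θ−1} tends to Γ(θ) as δ → 0⁺, where Γ is the real Gamma function. -/
/-!
Write `f x = exp (-x) * x ^ (θ - 1)` and `ceilMul δ x = δ * ⌈x / δ⌉₊`. The function
`f ∘ ceilMul δ` equals `f ((n + 1) δ)` on the cell `(n δ, (n + 1) δ]`, so its integral over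
`(0, ∞)` is exactly the Riemann sum `δ * ∑ f ((n + 1) δ)`, which is the expression in the theorem.
As `δ → 0⁺`, `ceilMul δ x → x`; for `δ ≤ 1` the point `ceilMul δ x` lies in `[x, x + 1]`, which
gives the integrable majorant `f x + e * f (x + 1)`, and dominated convergence yields `Γ(θ)`.
-/

open Filter Set MeasureTheory Topology

theorem MeasureTheory.IntegrableOn.comp_add_right_Ioi {E : Type*} [NormedAddCommGroup E]
    {f : ℝ → E} {a : ℝ} (c : ℝ) (hf : IntegrableOn f (Ioi (a + c))) :
    IntegrableOn (fun x => f (x + c)) (Ioi a) := by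
  have := (measurePreserving_add_right volume c).integrableOn_comp_preimage
    (measurableEmbedding_addRight c) (f := f) (s := Ioi (a + c))
  rw [preimage_add_const_Ioi, add_sub_cancel_right] at this
  exact this.mpr hf

noncomputable def ceilMul (δ x : ℝ) : ℝ := δ * ⌈x / δ⌉₊

section ceilMul

variable {δ : ℝ}

lemma measurable_ceilMul (δ : ℝ) : Measurable (ceilMul δ) :=
  measurable_const.mul <| measurable_from_nat.comp <| Nat.measurable_ceil.comp <|
    measurable_id.div_const δ

lemma le_ceilMul (hδ : 0 < δ) (x : ℝ) : x ≤ ceilMul δ x := by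
  rw [ceilMul, ← div_le_iff₀' hδ]
  exact Nat.le_ceil _

lemma ceilMul_lt (hδ : 0 < δ) {x : ℝ} (hx : 0 ≤ x) : ceilMul δ x < x + δ := by
  have := Nat.ceil_lt_add_one (div_nonneg hx hδ.le)
  rw [ceilMul]
  calc δ * ⌈x / δ⌉₊ < δ * (x / δ + 1) := by gcongr
    _ = x + δ := by field_simp

lemma tendsto_ceilMul_nhdsGT {x : ℝ} (hx : 0 ≤ x) :
    Tendsto (fun δ => ceilMul δ x) (𝓝[>] 0) (𝓝 x) := by
  have hup : Tendsto (fun δ => x + δ) (𝓝[>] 0) (𝓝 x) := by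
    simpa using (tendsto_const_nhds.add tendsto_id).mono_left
      (nhdsWithin_le_nhds (a := (0 : ℝ)))
  refine tendsto_of_tendsto_of_tendsto_of_le_of_le' tendsto_const_nhds hup ?_ ?_ <;>
    filter_upwards [self_mem_nhdsWithin] with δ hδ
  exacts [le_ceilMul hδ x, (ceilMul_lt hδ hx).le]

lemma mem_Ioc_nat_mul_iff (hδ : 0 < δ) {x : ℝ} {n : ℕ} :
    x ∈ Ioc (n * δ) ((n + 1) * δ) ↔ ⌈x / δ⌉₊ = n + 1 := by
  rw [Nat.ceil_eq_iff n.succ_ne_zero, mem_Ioc, lt_div_iff₀ hδ, div_le_iff₀ hδ]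
  push_cast
  simp

lemma iUnion_Ioc_nat_mul (hδ : 0 < δ) :
    ⋃ n : ℕ, Ioc (n * δ) ((n + 1) * δ) = Ioi 0 := by
  ext x
  simp only [mem_iUnion, mem_Ioi, mem_Ioc_nat_mul_iff hδ]
  constructor
  · rintro ⟨n, hn⟩
    have : 0 < ⌈x / δ⌉₊ := by omega
    exact (div_pos_iff_of_pos_right hδ).mp (Nat.ceil_pos.mp this)
  · intro hx
    exact ⟨⌈x / δ⌉₊ - 1, by have := Nat.ceil_pos.mpr (div_pos hx hδ); omega⟩

variable {E : Type*} [NormedAddCommGroup E] [NormedSpace ℝ E] [CompleteSpace E]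

theorem integral_comp_ceilMul (hδ : 0 < δ) {f : ℝ → E}
    (hf : IntegrableOn (fun x => f (ceilMul δ x)) (Ioi 0)) :
    ∫ x in Ioi 0, f (ceilMul δ x) = ∑' n : ℕ, δ • f ((n + 1) * δ) := by
  have hmono : Monotone fun n : ℕ => (n : ℝ) * δ := Nat.mono_cast.mul_const hδ.le
  have hdisj : Pairwise (Function.onFun Disjoint fun n : ℕ => Ioc (n * δ) ((n + 1) * δ)) := by
    simpa using hmono.pairwise_disjoint_on_Ioc_succ
  rw [← iUnion_Ioc_nat_mul hδ] at hf ⊢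
  rw [integral_iUnion (fun _ => measurableSet_Ioc) hdisj hf]
  refine tsum_congr fun n => ?_
  have hconst : EqOn (fun x => f (ceilMul δ x)) (fun _ => f ((n + 1) * δ))
      (Ioc (n * δ) ((n + 1) * δ)) := fun x hx => by
    simp only [ceilMul, (mem_Ioc_nat_mul_iff hδ).mp hx]
    push_cast; ring_nf
  rw [setIntegral_congr_fun measurableSet_Ioc hconst, setIntegral_const,
    Real.volume_real_Ioc_of_le (by gcongr; linarith)]
  ring_nf

end ceilMul

noncomputable def gammaIntegrand (θ x : ℝ) : ℝ := Real.exp (-x) * x ^ (θ - 1)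

section gammaIntegrand

variable {θ : ℝ}

lemma continuousAt_gammaIntegrand {x : ℝ} (hx : x ≠ 0) :
    ContinuousAt (gammaIntegrand θ) x := by
  unfold gammaIntegrand
  fun_prop (disch := simp [hx])

lemma measurable_gammaIntegrand (θ : ℝ) : Measurable (gammaIntegrand θ) := by
  unfold gammaIntegrand; fun_prop

lemma gammaIntegrand_nonneg {x : ℝ} (hx : 0 ≤ x) : 0 ≤ gammaIntegrand θ x := by
  unfold gammaIntegrand; positivity

lemma gammaIntegrand_le_of_mem_Icc {x y : ℝ} (hx : 0 < x) (hy : y ∈ Icc x (x + 1)) :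
    gammaIntegrand θ y ≤ gammaIntegrand θ x + Real.exp 1 * gammaIntegrand θ (x + 1) := by
  have hexp : Real.exp (-y) ≤ Real.exp (-x) := Real.exp_le_exp.mpr (neg_le_neg hy.1)
  have hpow : y ^ (θ - 1) ≤ x ^ (θ - 1) + (x + 1) ^ (θ - 1) := by
    rcases le_total θ 1 with hθ | hθ
    · have := Real.rpow_le_rpow_of_nonpos hx hy.1 (sub_nonpos.mpr hθ)
      linarith [Real.rpow_nonneg (by linarith : 0 ≤ x + 1) (θ - 1)]
    · have := Real.rpow_le_rpow (hx.le.trans hy.1) hy.2 (sub_nonneg.mpr hθ)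
      linarith [Real.rpow_nonneg hx.le (θ - 1)]
  calc gammaIntegrand θ y ≤ Real.exp (-x) * (x ^ (θ - 1) + (x + 1) ^ (θ - 1)) := by
        unfold gammaIntegrand
        exact mul_le_mul hexp hpow (Real.rpow_nonneg (hx.le.trans hy.1) _) (Real.exp_nonneg _)
    _ = _ := by
        unfold gammaIntegrand
        rw [mul_add, ← mul_assoc, ← Real.exp_add]
        ring_nf

lemma integrableOn_gammaIntegrand_majorant (hθ : 0 < θ) :
    IntegrableOn (fun x => gammaIntegrand θ x + Real.exp 1 * gammaIntegrand θ (x + 1))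
      (Ioi 0) := by
  have h : IntegrableOn (gammaIntegrand θ) (Ioi 0) := Real.GammaIntegral_convergent hθ
  have hshift : IntegrableOn (fun x => gammaIntegrand θ (x + 1)) (Ioi 0) :=
    .comp_add_right_Ioi 1 (by simpa using h.mono_set (Ioi_subset_Ioi zero_le_one))
  exact h.add (hshift.const_mul _)

lemma ae_norm_gammaIntegrand_ceilMul_le {δ : ℝ} (hδ : δ ∈ Ioc 0 1) :
    ∀ᵐ x ∂volume.restrict (Ioi 0), ‖gammaIntegrand θ (ceilMul δ x)‖ ≤
      gammaIntegrand θ x + Real.exp 1 * gammaIntegrand θ (x + 1) := by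
  refine ae_restrict_of_forall_mem measurableSet_Ioi fun x (hx : 0 < x) => ?_
  have hle := le_ceilMul hδ.1 x
  rw [Real.norm_of_nonneg (gammaIntegrand_nonneg (hx.le.trans hle))]
  exact gammaIntegrand_le_of_mem_Icc hx ⟨hle, by linarith [ceilMul_lt hδ.1 hx.le, hδ.2]⟩

lemma integrableOn_gammaIntegrand_ceilMul (hθ : 0 < θ) {δ : ℝ} (hδ : δ ∈ Ioc 0 1) :
    IntegrableOn (fun x => gammaIntegrand θ (ceilMul δ x)) (Ioi 0) :=
  (integrableOn_gammaIntegrand_majorant hθ).mono'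
    ((measurable_gammaIntegrand θ).comp (measurable_ceilMul δ)).aestronglyMeasurable
    (ae_norm_gammaIntegrand_ceilMul_le hδ)

lemma tendsto_integral_gammaIntegrand_ceilMul (hθ : 0 < θ) :
    Tendsto (fun δ => ∫ x in Ioi 0, gammaIntegrand θ (ceilMul δ x)) (𝓝[>] 0)
      (𝓝 (Real.Gamma θ)) := by
  rw [Real.Gamma_eq_integral hθ]
  refine tendsto_integral_filter_of_dominated_convergence _
    (.of_forall fun δ =>
      ((measurable_gammaIntegrand θ).comp (measurable_ceilMul δ)).aestronglyMeasurable)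
    ?_ (integrableOn_gammaIntegrand_majorant hθ) ?_
  · filter_upwards [Ioc_mem_nhdsGT zero_lt_one] with δ hδ
    exact ae_norm_gammaIntegrand_ceilMul_le hδ
  · refine ae_restrict_of_forall_mem measurableSet_Ioi fun x (hx : 0 < x) => ?_
    exact (continuousAt_gammaIntegrand hx.ne').tendsto.comp (tendsto_ceilMul_nhdsGT hx.le)

lemma mul_gammaIntegrand_mul {δ : ℝ} (hδ : 0 < δ) {y : ℝ} (hy : 0 ≤ y) :
    δ * gammaIntegrand θ (y * δ) = δ ^ θ * (Real.exp (-y * δ) * y ^ (θ - 1)) := by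
  rw [gammaIntegrand, Real.mul_rpow hy hδ.le, Real.rpow_sub_one hδ.ne']
  field_simp

end gammaIntegrand

theorem stmt_7 (θ : ℝ) (hθ : 0 < θ) :
    Tendsto (fun δ : ℝ => δ ^ θ * ∑' n : ℕ,
        Real.exp (-(n + 1 : ℝ) * δ) * ((n : ℝ) + 1) ^ (θ - 1))
      (nhdsWithin 0 (Set.Ioi 0)) (nhds (Real.Gamma θ)) := by
  refine (tendsto_integral_gammaIntegrand_ceilMul hθ).congr' ?_
  filter_upwards [Ioc_mem_nhdsGT zero_lt_one] with δ hδ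
  rw [integral_comp_ceilMul hδ.1 (integrableOn_gammaIntegrand_ceilMul hθ hδ), ← tsum_mul_left]
  exact tsum_congr fun n => mul_gammaIntegrand_mul hδ.1 (by positivity)
end
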